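/- Let F be a finite field of odd cardinality q with quadratic character χ, and S_m(x,y) = χ(x)·χ(m·x + y). If (u,v) ≠ (0,0) and m·u + v = 0, then u ≠ 0 and the autocorrelation ∑_{x,y} S_m(x,y)·S_m(x+u,y+v) equals 1 - q. -/

import Mathlib

/-!
Since `m (x + u) + (y + v) = m x + y`, the second factors of `S m (x, y)` and
`S m (x + u, y + v)` coincide, and their product `χ (m x + y) ^ 2` sums to `q - 1` over `y`.
What remains is `∑ x, χ x χ (x + u)` with `χ = χ⁻¹`; for `u ≠ 0` the dilation `x = -u t` turns it
into `χ (-1) J(χ, χ⁻¹) = -χ (-1) ^ 2 = -1`, for any nontrivial character `χ`.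
-/

open Finset

namespace MulChar

variable {F R : Type*} [Field F] [Fintype F] [CommRing R]

theorem sum_mul_inv_apply [DecidableEq F] (χ : MulChar F R) :
    ∑ a, χ a * χ⁻¹ a = Fintype.card F - 1 := by
  simp only [← mul_apply, mul_inv_cancel, sum_one_eq_card_units, Fintype.card_units,
    Nat.cast_sub Fintype.card_pos, Nat.cast_one]

theorem sum_mul_inv_apply_add [IsDomain R] {χ : MulChar F R} (hχ : χ ≠ 1) {u : F} (hu : u ≠ 0) :
    ∑ x, χ x * χ⁻¹ (x + u) = -1 := by
  have hunit : χ u * χ⁻¹ u = 1 := by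
    rw [← mul_apply, mul_inv_cancel, one_apply (Ne.isUnit hu)]
  have hsign : χ (-1) * χ (-1) = 1 := by
    rw [← map_mul, neg_one_mul, neg_neg, map_one]
  calc ∑ x, χ x * χ⁻¹ (x + u)
      = ∑ t, χ (-u * t) * χ⁻¹ (-u * t + u) :=
        (Equiv.sum_comp (Equiv.mulLeft₀ (-u) (neg_ne_zero.mpr hu)) _).symm
    _ = ∑ t, χ (-1) * (χ u * χ⁻¹ u) * (χ t * χ⁻¹ (1 - t)) := by
        refine sum_congr rfl fun t _ => ?_
        rw [show -u * t + u = u * (1 - t) by ring, show -u * t = -1 * u * t by ring,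
          map_mul, map_mul, map_mul]
        ring
    _ = χ (-1) * jacobiSum χ χ⁻¹ := by rw [jacobiSum, hunit, mul_one, mul_sum]
    _ = -1 := by rw [jacobiSum_nontrivial_inv hχ, mul_neg, hsign]

end MulChar

theorem circulant_legendre_autocorrelation_case2
    (F : Type*) [Field F] [Fintype F] [DecidableEq F]
    (hodd : Odd (Fintype.card F))
    (χ : F → ℤ) (hχ : ∀ x, χ x = quadraticChar F x)
    (S : F → F × F → ℤ) (hS : ∀ m x y, S m (x, y) = χ x * χ (m * x + y))
    (m : F) (u v : F) (huv : (u, v) ≠ (0, 0)) (h : m * u + v = 0) :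
    u ≠ 0 ∧
    ∑ x : F, ∑ y : F, S m (x, y) * S m (x + u, y + v) = 1 - (Fintype.card F : ℤ) := by
  have hu : u ≠ 0 := by
    rintro rfl
    exact huv (by simpa using h)
  refine ⟨hu, ?_⟩
  have hF : ringChar F ≠ 2 := fun h2 => by
    simpa [Nat.odd_iff.mp hodd] using FiniteField.even_card_of_char_two h2
  set ψ := quadraticChar F
  have hinv : ψ⁻¹ = ψ := (quadraticChar_isQuadratic F).inv
  have hterm : ∀ x y, S m (x, y) * S m (x + u, y + v) =
      ψ x * ψ⁻¹ (x + u) * (ψ (m * x + y) * ψ⁻¹ (m * x + y)) := fun x y => by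
    rw [hS, hS, hinv, hχ, hχ, hχ, hχ, show m * (x + u) + (y + v) = m * x + y by
      linear_combination h]
    ring
  calc ∑ x, ∑ y, S m (x, y) * S m (x + u, y + v)
      = ∑ x, ψ x * ψ⁻¹ (x + u) * (Fintype.card F - 1) := by
        refine sum_congr rfl fun x _ => ?_
        have hshift : ∑ y, ψ (m * x + y) * ψ⁻¹ (m * x + y) = ∑ t, ψ t * ψ⁻¹ t :=
          Equiv.sum_comp (Equiv.addLeft (m * x)) (fun t => ψ t * ψ⁻¹ t)
        simp only [hterm, ← mul_sum, hshift, ψ.sum_mul_inv_apply]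
    _ = 1 - Fintype.card F := by
        rw [← sum_mul, MulChar.sum_mul_inv_apply_add (quadraticChar_ne_one hF) hu]
        ring
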